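/- Let M = N_T ×_f N be a warped product submanifold of an almost contact metric manifold with ξ tangent to the invariant first factor N_T. Then g(𝒫_Z X, Y) = 0 for all X, Y tangent to N_T and Z tangent to N. -/

import Mathlib

/-- Abstract model of an isometrically immersed (doubly/singly) warped product
submanifold `M = N₁ ×_f N₂` of an almost contact metric manifold
`(M̃, φ, ξ, η, g̃)`, at the level of vector fields along `M`.  `F` plays the
role of the ring of smooth functions, `V` the module of ambient vector fields
along `M`; `act X a` is the derivative `X(a)`; `nab` is the ambient Levi-Civita
connection `∇̃`, `nabM` the induced connection `∇` on `M` and `h` the second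
fundamental form (Gauss formula `∇̃_X Y = ∇_X Y + h(X,Y)`); `Tang` is the
space of vector fields tangent to `M`, `D1`, `D2` those tangent to the factors
`N₁`, `N₂`; `P X`/`Fn X` are the tangential/normal parts of `φX` for `X`
tangent to `M`, and `Pc U W`/`Qc U W` the tangential/normal parts
`𝒫_U W`/`𝒬_U W` of `(∇̃_U φ) W = ∇̃_U (φW) − φ (∇̃_U W)`.  `η` is given by
`η(X) = g̃(X, ξ)`. -/
structure ContactWarpedSetting (F : Type*) (V : Type*) [CommRing F]
    [AddCommGroup V] [Module F V] where
  g : V →ₗ[F] V →ₗ[F] F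
  g_symm : ∀ X Y, g X Y = g Y X
  act : V → F → F
  act_add : ∀ X a b, act X (a + b) = act X a + act X b
  act_mul : ∀ X a b, act X (a * b) = a * act X b + b * act X a
  nab : V → V → V
  nab_metric : ∀ X Y Z, act X (g Y Z) = g (nab X Y) Z + g Y (nab X Z)
  phi : V →ₗ[F] V
  xi : V
  phi_phi : ∀ X, phi (phi X) = -X + (g X xi) • xi
  phi_xi : phi xi = 0
  g_xixi : g xi xi = 1
  phi_compat : ∀ X Y, g (phi X) (phi Y) = g X Y - (g X xi) * (g Y xi)
  Tang : Submodule F V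
  D1 : Submodule F V
  D2 : Submodule F V
  D1_le : D1 ≤ Tang
  D2_le : D2 ≤ Tang
  ortho : ∀ X ∈ D1, ∀ Z ∈ D2, g X Z = 0
  nabM : V → V → V
  nabM_tang : ∀ X Y, nabM X Y ∈ Tang
  h : V → V → V
  h_symm : ∀ X Y, h X Y = h Y X
  h_normal : ∀ X Y, ∀ T ∈ Tang, g (h X Y) T = 0
  gauss : ∀ X ∈ Tang, ∀ Y ∈ Tang, nab X Y = nabM X Y + h X Y
  P : V → V
  Fn : V → V
  phi_decomp : ∀ X ∈ Tang, phi X = P X + Fn X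
  P_tang : ∀ X, P X ∈ Tang
  Fn_normal : ∀ X, ∀ T ∈ Tang, g (Fn X) T = 0
  Pc : V → V → V
  Qc : V → V → V
  Pc_tang : ∀ U W, Pc U W ∈ Tang
  Qc_normal : ∀ U W, ∀ T ∈ Tang, g (Qc U W) T = 0
  cov_decomp : ∀ U ∈ Tang, ∀ W ∈ Tang,
    nab U (phi W) - phi (nab U W) = Pc U W + Qc U W

/-!
Pairing `𝒫_Z X = ∇̃_Z (φX) - φ (∇̃_Z X) - 𝒬_Z X` with `Y ∈ N_T` kills the normal term `𝒬_Z X`, and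
skew-symmetry of `φ` turns the middle term into `g(∇̃_Z X, φY)`. Since `φ` preserves `N_T`, both
remaining terms have the form `g(∇̃_Z W, Y')` with `W, Y'` in `N_T`, and these vanish because
`∇̃_Z W = (W ln f) Z + h(Z, W)` is the sum of a vector in `N` and a normal vector.
-/

namespace ContactWarpedSetting

variable {F V : Type*} [CommRing F] [AddCommGroup V] [Module F V] (S : ContactWarpedSetting F V)

/-- Apply `φ² = -1 + η ⊗ ξ` to `φX` and compare with `φ` applied to it. -/
theorem g_phi_xi (X : V) : S.g (S.phi X) S.xi = 0 := by
  have hphi3 : S.phi (S.phi (S.phi X)) = -S.phi X := by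
    simpa [S.phi_xi] using congrArg S.phi (S.phi_phi X)
  have hsmul : S.g (S.phi X) S.xi • S.xi = 0 := by
    have h := S.phi_phi (S.phi X)
    rw [hphi3] at h
    exact left_eq_add.mp h
  simpa [S.g_xixi] using congrArg (fun W => S.g W S.xi) hsmul

theorem g_phi_skew (X Y : V) : S.g (S.phi X) Y = -S.g X (S.phi Y) := by
  have h := S.phi_compat (S.phi X) Y
  have hxi : S.g S.xi (S.phi Y) = 0 := by rw [S.g_symm]; exact S.g_phi_xi Y
  rw [S.phi_phi X, S.g_phi_xi X] at h
  simp only [map_add, map_neg, map_smul, LinearMap.add_apply, LinearMap.neg_apply,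
    LinearMap.smul_apply, hxi, smul_eq_mul, mul_zero, add_zero, zero_mul, sub_zero] at h
  linear_combination -h

theorem g_nab_eq_zero_of_warp {dlf : V → F}
    (warp' : ∀ X ∈ S.D1, ∀ Z ∈ S.D2, S.nabM Z X = dlf X • Z)
    {X Y Z : V} (hX : X ∈ S.D1) (hY : Y ∈ S.D1) (hZ : Z ∈ S.D2) :
    S.g (S.nab Z X) Y = 0 := by
  have hZY : S.g Z Y = 0 := by rw [S.g_symm]; exact S.ortho Y hY Z hZ
  rw [S.gauss Z (S.D2_le hZ) X (S.D1_le hX), warp' X hX Z hZ, map_add, LinearMap.add_apply,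
    S.h_normal Z X Y (S.D1_le hY), map_smul, LinearMap.smul_apply, hZY, smul_zero, add_zero]

end ContactWarpedSetting

theorem T1_iii_general {F V : Type*} [CommRing F] [AddCommGroup V] [Module F V]
    (S : ContactWarpedSetting F V)
    (dlf : V → F)
    (warp' : ∀ X ∈ S.D1, ∀ Z ∈ S.D2, S.nabM Z X = dlf X • Z)
    (inv1 : ∀ X ∈ S.D1, S.phi X ∈ S.D1) :
    ∀ X ∈ S.D1, ∀ Y ∈ S.D1, ∀ Z ∈ S.D2, S.g (S.Pc Z X) Y = 0 := by
  intro X hX Y hY Z hZ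
  have hPc : S.Pc Z X = S.nab Z (S.phi X) - S.phi (S.nab Z X) - S.Qc Z X :=
    eq_sub_of_add_eq (S.cov_decomp Z (S.D2_le hZ) X (S.D1_le hX)).symm
  have hQc : S.g (S.Qc Z X) Y = 0 := S.Qc_normal Z X Y (S.D1_le hY)
  rw [hPc, map_sub, map_sub, LinearMap.sub_apply, LinearMap.sub_apply, hQc, S.g_phi_skew,
    S.g_nab_eq_zero_of_warp warp' (inv1 X hX) hY hZ,
    S.g_nab_eq_zero_of_warp warp' hX (inv1 Y hY) hZ]
  simp

theorem T1_iii {F V : Type*} [CommRing F] [AddCommGroup V] [Module F V]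
    (S : ContactWarpedSetting F V)
    (hxi : S.xi ∈ S.D1)
    (dlf : V → F)
    (warp : ∀ X ∈ S.D1, ∀ Z ∈ S.D2, S.nabM X Z = dlf X • Z)
    (warp' : ∀ X ∈ S.D1, ∀ Z ∈ S.D2, S.nabM Z X = dlf X • Z)
    (inv1 : ∀ X ∈ S.D1, S.phi X ∈ S.D1) :
    ∀ X ∈ S.D1, ∀ Y ∈ S.D1, ∀ Z ∈ S.D2, S.g (S.Pc Z X) Y = 0 :=
  T1_iii_general S dlf warp' inv1
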